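/- arXiv:1002.1054 — 2 statements merged into one kernel-verified Lean document; each statement's English description precedes it below -/
import Mathlib

section
/- Let A be an n×n real matrix of rank s < n and let U be an n×s matrix whose columns form an orthonormal basis of im(A). Then 0 is a defective eigenvalue of A if and only if 0 is an eigenvalue of the s×s matrix B₁ := Uᵀ A U (i.e., B₁ is singular). -/
/-!
Since `im A = im U` and `Uᵀ U = 1`, the orthogonal projection `U Uᵀ` fixes `A`, so `A = U (Uᵀ A)`.
Sylvester's identity for characteristic polynomials then gives
`X ^ s * χ_A = X ^ n * χ_{B₁}` with `B₁ = Uᵀ A U`, so the algebraic multiplicity of `0` for `A` is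
`n - s` plus that for `B₁`. As `n - s` is the geometric multiplicity, `0` is defective exactly when it
is a root of `χ_{B₁}`, i.e. when `B₁` is singular.
-/

open Matrix Polynomial

namespace Polynomial

theorem rootMultiplicity_zero_X_pow_mul {R : Type*} [CommRing R] {p : R[X]} (hp : p ≠ 0) (k : ℕ) :
    rootMultiplicity 0 (X ^ k * p) = k + rootMultiplicity 0 p := by
  simpa [mul_comm, add_comm] using rootMultiplicity_mul_X_sub_C_pow (a := (0 : R)) (n := k) hp

end Polynomial

namespace Matrix

theorem mul_mul_eq_self_of_range_le {R m n l : Type*} [CommSemiring R] [Fintype m] [Fintype n]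
    [DecidableEq n] [Fintype l] {U : Matrix m n R} {V : Matrix n m R} {A : Matrix m l R}
    (hVU : V * U = 1) (hA : LinearMap.range A.mulVecLin ≤ LinearMap.range U.mulVecLin) :
    U * V * A = A := by
  refine ext_iff_mulVec.mpr fun v => ?_
  obtain ⟨x, hx⟩ := hA ⟨v, rfl⟩
  simp only [mulVecLin_apply] at hx
  rw [← mulVec_mulVec, ← hx, mulVec_mulVec, Matrix.mul_assoc, hVU, Matrix.mul_one]

section Charpoly

variable {R : Type*} [CommRing R] [Nontrivial R] {m n : Type*} [Fintype m] [Fintype n]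
  [DecidableEq n]

theorem card_add_rootMultiplicity_zero_charpoly_mul_comm [DecidableEq m] (A : Matrix m n R)
    (B : Matrix n m R) :
    Fintype.card n + rootMultiplicity 0 (A * B).charpoly =
      Fintype.card m + rootMultiplicity 0 (B * A).charpoly := by
  rw [← rootMultiplicity_zero_X_pow_mul (charpoly_monic _).ne_zero,
    ← rootMultiplicity_zero_X_pow_mul (charpoly_monic _).ne_zero, charpoly_mul_comm']

theorem rootMultiplicity_zero_charpoly_pos_iff (A : Matrix n n R) :
    0 < rootMultiplicity 0 A.charpoly ↔ A.det = 0 := by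
  rw [rootMultiplicity_pos (charpoly_monic A).ne_zero, IsRoot.def, ← coeff_zero_eq_eval_zero,
    det_eq_sign_charpoly_coeff, (isUnit_neg_one.pow _).mul_right_eq_zero]

end Charpoly

end Matrix

theorem stmt2_general {n s : ℕ} (A : Matrix (Fin n) (Fin n) ℝ)
    (hrank : A.rank = s)
    (U : Matrix (Fin n) (Fin s) ℝ)
    (hU : Uᵀ * U = 1)
    (hrange : LinearMap.range U.mulVecLin = LinearMap.range A.mulVecLin) :
    (Module.finrank ℝ (LinearMap.ker A.mulVecLin) <
      Polynomial.rootMultiplicity 0 A.charpoly) ↔ (Uᵀ * A * U).det = 0 := by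
  have hA : U * (Uᵀ * A) = A := by
    rw [← Matrix.mul_assoc]
    exact mul_mul_eq_self_of_range_le hU hrange.ge
  have hmult := card_add_rootMultiplicity_zero_charpoly_mul_comm U (Uᵀ * A)
  rw [hA, Fintype.card_fin, Fintype.card_fin] at hmult
  have hker : s + Module.finrank ℝ (LinearMap.ker A.mulVecLin) = n := by
    rw [← hrank, Matrix.rank, LinearMap.finrank_range_add_finrank_ker, Module.finrank_fin_fun]
  rw [← rootMultiplicity_zero_charpoly_pos_iff]
  omega

/-- For A of rank s < n and U an n×s matrix with orthonormal columns spanning im(A),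
0 is a defective eigenvalue of A iff the s×s matrix Uᵀ A U is singular. -/
theorem stmt2 {n s : ℕ} (hs : s < n) (A : Matrix (Fin n) (Fin n) ℝ)
    (hrank : A.rank = s)
    (U : Matrix (Fin n) (Fin s) ℝ)
    (hU : Uᵀ * U = 1)
    (hrange : LinearMap.range U.mulVecLin = LinearMap.range A.mulVecLin) :
    (Module.finrank ℝ (LinearMap.ker A.mulVecLin) <
      Polynomial.rootMultiplicity 0 A.charpoly) ↔ (Uᵀ * A * U).det = 0 :=
  stmt2_general A hrank U hU hrange
end

section
/- Let B ∈ ℝ^{m×n} be a real matrix such that for every nonzero sign vector σ ∈ {−1,0,1}^m there is a column of diag(σ)·sign(B) that is nonzero and nonnegative (where sign is applied entrywise to B), and suppose sign(B) has no zero row. Then there exists a strictly positive vector ν ∈ ℝ^n with B ν = 0; i.e., every matrix whose sign pattern is an L⁺-matrix has a positive null vector. -/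
open Matrix

/-- Sign auxiliary lemma. -/
lemma sign_aux {a b : ℝ} (h : 0 ≤ -Real.sign a * Real.sign b) :
    a * b ≤ 0 ∧ (a ≠ 0 → Real.sign b ≠ 0 → a * b < 0) := by
  rcases lt_trichotomy a 0 with ha | ha | ha
  · rw [Real.sign_of_neg ha] at h
    simp only [neg_neg, one_mul] at h
    rcases lt_trichotomy b 0 with hb | hb | hb
    · rw [Real.sign_of_neg hb] at h; norm_num at h
    · subst hb; simp
    · constructor
      · nlinarith
      · intro _ _; nlinarith
  · subst ha; simp
  · rw [Real.sign_of_pos ha] at h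
    simp only [neg_mul, one_mul, Left.nonneg_neg_iff] at h
    rcases lt_trichotomy b 0 with hb | hb | hb
    · constructor
      · nlinarith
      · intro _ _; nlinarith
    · subst hb; simp
    · rw [Real.sign_of_pos hb] at h; norm_num at h

/-- If the sign pattern of B satisfies the L⁺ column condition and has no zero row,
then B has a strictly positive null vector. -/
theorem stmt8 {m n : ℕ} (B : Matrix (Fin m) (Fin n) ℝ)
    (hcol : ∀ σ : Fin m → ℝ, (∀ i, σ i = -1 ∨ σ i = 0 ∨ σ i = 1) → σ ≠ 0 →
      ∃ j, (∃ i, σ i * Real.sign (B i j) ≠ 0) ∧ ∀ i, 0 ≤ σ i * Real.sign (B i j))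
    (hrow : ∀ i, ∃ j, Real.sign (B i j) ≠ 0) :
    ∃ ν : Fin n → ℝ, (∀ j, 0 < ν j) ∧ B.mulVec ν = 0 := by
  -- Handle the degenerate case n = 0
  rcases Nat.eq_zero_or_pos n with hn | hn
  · subst hn
    refine ⟨0, fun j => j.elim0, ?_⟩
    funext i
    exact absurd (hrow i) (by rintro ⟨j, -⟩; exact j.elim0)
  -- W = row space of B
  set W : Submodule ℝ (Fin n → ℝ) := LinearMap.range B.vecMulLinear with hW
  -- W is disjoint from the standard simplex
  have hdisj : Disjoint (W : Set (Fin n → ℝ)) (stdSimplex ℝ (Fin n)) := by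
    rw [Set.disjoint_left]
    rintro x hxW ⟨hx0, hx1⟩
    obtain ⟨y, rfl⟩ := hxW
    -- y ≠ 0 since the simplex does not contain 0
    set σ : Fin m → ℝ := fun i => -Real.sign (y i) with hσ
    have hσvals : ∀ i, σ i = -1 ∨ σ i = 0 ∨ σ i = 1 := by
      intro i
      rcases lt_trichotomy (y i) 0 with h | h | h
      · right; right; simp [hσ, Real.sign_of_neg h]
      · right; left; simp [hσ, h]
      · left; simp [hσ, Real.sign_of_pos h]
    have hσne : σ ≠ 0 := by
      intro h0
      have hy : y = 0 := by
        funext i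
        have := congrFun h0 i
        simp only [hσ, Pi.zero_apply, neg_eq_zero, Real.sign_eq_zero_iff] at this
        exact this
      subst hy
      rw [show (B.vecMulLinear 0 : Fin n → ℝ) = 0 from map_zero _] at hx1
      simp at hx1
    obtain ⟨j, ⟨i₀, hi₀⟩, hall⟩ := hcol σ hσvals hσne
    have hterm : ∀ i, y i * B i j ≤ 0 := fun i => (sign_aux (hall i)).1
    have hy0 : y i₀ ≠ 0 := by
      intro h; rw [hσ] at hi₀; simp [h] at hi₀
    have hB0 : Real.sign (B i₀ j) ≠ 0 := by
      intro h; rw [h] at hi₀; simp at hi₀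
    have hstrict : y i₀ * B i₀ j < 0 := (sign_aux (hall i₀)).2 hy0 hB0
    have hsum : (∑ i, y i * B i j) < 0 := by
      have := Finset.sum_lt_sum (f := fun i => y i * B i j) (g := fun _ => (0:ℝ))
        (fun i _ => hterm i) ⟨i₀, Finset.mem_univ i₀, hstrict⟩
      simpa using this
    have : 0 ≤ B.vecMulLinear y j := hx0 j
    rw [Matrix.vecMulLinear_apply] at this
    simp only [Matrix.vecMul, dotProduct] at this
    exact absurd this (not_le.mpr hsum)
  -- Separate W from the simplex
  obtain ⟨f, u, v, hfW, huv, hft⟩ :=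
    geometric_hahn_banach_closed_compact (W.convex) (W.closed_of_finiteDimensional)
      (convex_stdSimplex ℝ (Fin n)) (isCompact_stdSimplex ℝ (Fin n)) hdisj
  -- f vanishes on W
  have hfW0 : ∀ w ∈ W, f w = 0 := by
    intro w hw
    by_contra hne
    have hall : ∀ t : ℝ, t * f w < u := fun t => by
      have : (t • w) ∈ W := W.smul_mem t hw
      simpa using hfW _ this
    have h1 := hall ((u + 1) / f w)
    rw [div_mul_cancel₀ _ hne] at h1
    linarith
  have hu0 : 0 < u := by
    have := hfW 0 W.zero_mem
    simpa using this
  -- the null vector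
  refine ⟨fun j => f (Pi.single j 1), ?_, ?_⟩
  · intro j
    have hmem : (Pi.single j 1 : Fin n → ℝ) ∈ stdSimplex ℝ (Fin n) :=
      single_mem_stdSimplex ℝ j
    have := hft _ hmem
    linarith
  · funext i
    have hrowW : (fun j => B i j) ∈ W := by
      refine ⟨Pi.single i 1, ?_⟩
      funext j
      simp [Matrix.vecMulLinear_apply, Matrix.vecMul, dotProduct,
        Pi.single_apply]
    have key : f (fun j => B i j) = 0 := hfW0 _ hrowW
    have hdecomp : (fun j => B i j) = ∑ j, (B i j) • (Pi.single j 1 : Fin n → ℝ) := by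
      funext k
      simp [Finset.sum_apply, Pi.single_apply, mul_comm]
    rw [hdecomp] at key
    rw [map_sum] at key
    simp only [ContinuousLinearMap.map_smul, smul_eq_mul] at key
    show (∑ j, B i j * f (Pi.single j 1)) = 0
    exact key
end
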